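/- arXiv:2312.02795 — 2 statements merged into one kernel-verified Lean document; each statement's English description precedes it below -/
import Mathlib

section
/- Let A ⊂ ℂⁿ∖{0} (n ≥ 2) be the punctured cone on a connected submanifold Y of ℙ^{n−1}, algebraically elliptic and not contained in any hyperplane of ℂⁿ, and let M be a smooth affine curve. If the tangent bundle TM is algebraically trivial (for example, if M has genus 1 or M is planar), then the pair (A, M) is good, i.e., the bundle 𝒜 ⊂ (T*M)^{⊕n} defined by A admits a regular section on M. -/
open Filter Topology Set
open scoped Manifold Topology

noncomputable section

/-! ### Algebraic preliminaries on cones in `ℂⁿ` -/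

/-- A tangent vector `w` to a set `A ⊆ ℂⁿ` at a point `z`, realized by a holomorphic curve. -/
def TangentVecAt {n : ℕ} (A : Set (Fin n → ℂ)) (z w : Fin n → ℂ) : Prop :=
  ∃ f : ℂ → Fin n → ℂ, DifferentiableAt ℂ f 0 ∧ f 0 = z ∧ deriv f 0 = w ∧
    ∀ᶠ c in 𝓝 (0 : ℂ), f c ∈ A

/-- `A ⊆ ℂⁿ` is algebraically elliptic: it admits a dominating algebraic spray
(on a trivial bundle). -/
def AlgebraicallyElliptic {n : ℕ} (A : Set (Fin n → ℂ)) : Prop :=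
  ∃ N : ℕ, ∃ s : (Fin n → ℂ) → (Fin N → ℂ) → (Fin n → ℂ),
    (∀ i : Fin n, ∃ p : MvPolynomial ((Fin n) ⊕ (Fin N)) ℂ,
      ∀ z v, s z v i = MvPolynomial.eval (Sum.elim z v) p) ∧
    (∀ z ∈ A, ∀ v, s z v ∈ A) ∧
    (∀ z ∈ A, s z 0 = z) ∧
    (∀ z ∈ A, ∀ w, TangentVecAt A z w → ∃ v, fderiv ℂ (s z) 0 v = w)

/-- `A` is the punctured cone in `ℂⁿ∖{0}` on a connected smooth submanifold of `ℙ^{n-1}`. -/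
structure IsPuncturedCone {n : ℕ} (A : Set (Fin n → ℂ)) : Prop where
  nonempty : A.Nonempty
  not_zero : (0 : Fin n → ℂ) ∉ A
  isClosed : IsClosed (insert (0 : Fin n → ℂ) A)
  cone : ∀ c : ℂ, c ≠ 0 → ∀ z ∈ A, c • z ∈ A
  connected : IsConnected A
  smooth : ∀ z ∈ A, ∃ (d : ℕ) (U : Set (Fin n → ℂ)), IsOpen U ∧ z ∈ U ∧
    ∃ f : (Fin n → ℂ) → (Fin d → ℂ), DifferentiableOn ℂ f U ∧
      (∀ w ∈ U, (w ∈ A ↔ f w = 0)) ∧ Function.Surjective (fderiv ℂ f z)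

/-- `A` is not contained in any (linear) hyperplane of `ℂⁿ`. -/
def NotInHyperplane {n : ℕ} (A : Set (Fin n → ℂ)) : Prop :=
  ∀ φ : (Fin n → ℂ) →ₗ[ℂ] ℂ, (∀ z ∈ A, φ z = 0) → φ = 0

/-! ### Riemann surfaces, holomorphic functions and 1-forms -/

variable {Mbar : Type*} [TopologicalSpace Mbar] [ChartedSpace ℂ Mbar]

/-- A map from a Riemann surface to a complex vector space is holomorphic on a set. -/
def HoloOn {E : Type*} [NormedAddCommGroup E] [NormedSpace ℂ E]
    (u : Mbar → E) (U : Set Mbar) : Prop :=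
  MDifferentiableOn 𝓘(ℂ, ℂ) 𝓘(ℂ, E) u U

/-- The derivative coefficient of `u` at `x`, computed in the preferred chart at `x`. -/
def mder {E : Type*} [NormedAddCommGroup E] [NormedSpace ℂ E]
    (u : Mbar → E) (x : Mbar) : E :=
  mfderiv 𝓘(ℂ, ℂ) 𝓘(ℂ, E) u x (1 : ℂ)

/-- `ω` (given by its coefficients in the preferred charts) is a holomorphic `(1,0)`-form
on `U`: near every point of `U` it is the differential of a holomorphic function. -/
def IsHolOneFormOn {E : Type*} [NormedAddCommGroup E] [NormedSpace ℂ E]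
    (ω : Mbar → E) (U : Set Mbar) : Prop :=
  ∀ x ∈ U, ∃ V ∈ 𝓝 x, ∃ u : Mbar → E, HoloOn u (V ∩ U) ∧ ∀ y ∈ V ∩ U, ω y = mder u y

/-- The derivative coefficient of the inverse of the preferred chart at `p`. -/
def chartDerCoeff (p : Mbar) (z : ℂ) : ℂ :=
  mfderiv 𝓘(ℂ, ℂ) 𝓘(ℂ, ℂ) ((chartAt ℂ p).symm) z (1 : ℂ)

/-- The local representative of the 1-form `ω` in the preferred chart at `p`
(the pullback of `ω` by the inverse of the chart). -/
def pullCoeff {E : Type*} [NormedAddCommGroup E] [NormedSpace ℂ E]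
    (ω : Mbar → E) (p : Mbar) (z : ℂ) : E :=
  chartDerCoeff p z • ω ((chartAt ℂ p).symm z)

/-- The 1-form `ω` extends meromorphically across the point `p`. -/
def MeroFormAt {E : Type*} [NormedAddCommGroup E] [NormedSpace ℂ E]
    (ω : Mbar → E) (p : Mbar) : Prop :=
  MeromorphicAt (pullCoeff ω p) (chartAt ℂ p p)

/-- The 1-form `ω` has an effective pole at `p`. -/
def FormPoleAt {E : Type*} [NormedAddCommGroup E] [NormedSpace ℂ E]
    (ω : Mbar → E) (p : Mbar) : Prop :=
  Tendsto (fun z => ‖pullCoeff ω p z‖) (𝓝[≠] ((chartAt ℂ p) p)) atTop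

/-- The function `u` extends meromorphically across the point `p`. -/
def MeroFunAt {E : Type*} [NormedAddCommGroup E] [NormedSpace ℂ E]
    (u : Mbar → E) (p : Mbar) : Prop :=
  MeromorphicAt (fun z => u ((chartAt ℂ p).symm z)) ((chartAt ℂ p) p)

/-- The function `u` has an effective pole at the point `p`. -/
def FunPoleAt {E : Type*} [NormedAddCommGroup E] [NormedSpace ℂ E]
    (u : Mbar → E) (p : Mbar) : Prop :=
  Tendsto (fun x => ‖u x‖) (𝓝[≠] p) atTop

/-- `K` is a compact set which is holomorphically convex in `U` (it equals its hull with
respect to the algebra of functions holomorphic on `U`). -/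
def HolConvexIn (K U : Set Mbar) : Prop :=
  K ⊆ U ∧ IsCompact K ∧
    ∀ x ∈ U, x ∉ K → ∃ f : Mbar → ℂ, HoloOn f U ∧ ∀ y ∈ K, ‖f y‖ < ‖f x‖

/-! ### Sections of the bundle `𝒜 ⊂ (T*M)^{⊕n}` defined by the cone `A` -/

variable {n : ℕ}

/-- A holomorphic section of the bundle `𝒜 ⊆ (T*M)^{⊕n}` determined by the cone `A` over the
set `U`: an `n`-tuple of holomorphic `(1,0)`-forms whose coefficient vector lies in `A`
(in particular the components have no common zeros and their ratio lies in `Y`). -/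
def SectionA (A : Set (Fin n → ℂ)) (ω : Mbar → Fin n → ℂ) (U : Set Mbar) : Prop :=
  IsHolOneFormOn ω U ∧ ∀ x ∈ U, ω x ∈ A

/-- A regular section of `𝒜` on the affine curve `M = Mbar ∖ ends`: a holomorphic section
whose component 1-forms extend meromorphically to the ends. -/
def RegularSectionA (A : Set (Fin n → ℂ)) (ω : Mbar → Fin n → ℂ) (ends : Finset Mbar) : Prop :=
  SectionA A ω {x | x ∉ ends} ∧ ∀ p ∈ ends, MeroFormAt ω p

/-- The 1-form `ω` is exact on `U`: it is the differential of a global holomorphic map. -/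
def ExactOn {E : Type*} [NormedAddCommGroup E] [NormedSpace ℂ E]
    (ω : Mbar → E) (U : Set Mbar) : Prop :=
  ∃ u : Mbar → E, HoloOn u U ∧ ∀ x ∈ U, ω x = mder u x

/-- `s` is a continuous section of `𝒜` over `U`: its values lie in `A` and its ratio with
some nowhere-vanishing holomorphic 1-form on `U` is continuous. -/
def ContSectionA (A : Set (Fin n → ℂ)) (s : Mbar → Fin n → ℂ) (U : Set Mbar) : Prop :=
  (∀ x ∈ U, s x ∈ A) ∧ ∃ θ : Mbar → ℂ, IsHolOneFormOn θ U ∧ (∀ x ∈ U, θ x ≠ 0) ∧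
    ContinuousOn (fun x => (θ x)⁻¹ • s x) U

/-- The sections `s` and `t` of `𝒜` are homotopic through continuous sections of `𝒜` over `U`. -/
def HomotopicSectionsOn (A : Set (Fin n → ℂ)) (s t : Mbar → Fin n → ℂ) (U : Set Mbar) : Prop :=
  ∃ θ : Mbar → ℂ, IsHolOneFormOn θ U ∧ (∀ x ∈ U, θ x ≠ 0) ∧
    ∃ H : ℝ → Mbar → Fin n → ℂ,
      (∀ x ∈ U, H 0 x = s x) ∧ (∀ x ∈ U, H 1 x = t x) ∧
      (∀ r ∈ Icc (0:ℝ) 1, ∀ x ∈ U, H r x ∈ A) ∧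
      ContinuousOn (fun q : ℝ × Mbar => (θ q.2)⁻¹ • H q.1 q.2) (Icc (0:ℝ) 1 ×ˢ U)

/-! ### Loops, periods, and period homomorphisms -/

/-- `γ` is a loop in `U` (parametrized by `[0,1]`). -/
def IsLoopIn (U : Set Mbar) (γ : ℝ → Mbar) : Prop :=
  ContinuousOn γ (Icc 0 1) ∧ γ 0 = γ 1 ∧ ∀ r ∈ Icc (0:ℝ) 1, γ r ∈ U

/-- `γ` is a (possibly closed) embedded arc in `U`. -/
def IsArcIn (U : Set Mbar) (γ : ℝ → Mbar) : Prop :=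
  ContinuousOn γ (Icc 0 1) ∧ InjOn γ (Ico 0 1) ∧ ∀ r ∈ Icc (0:ℝ) 1, γ r ∈ U

/-- The period `∫_γ ω = c` of the holomorphic 1-form `ω` along the path `γ`, defined by
analytic continuation of local primitives of `ω` along `γ`. -/
def HasPeriod {E : Type*} [NormedAddCommGroup E] [NormedSpace ℂ E]
    (ω : Mbar → E) (γ : ℝ → Mbar) (c : E) : Prop :=
  ∃ h : ℝ → E, h 1 - h 0 = c ∧ ∀ r ∈ Icc (0:ℝ) 1, ∃ V ∈ 𝓝 (γ r), ∃ u : Mbar → E,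
    HoloOn u V ∧ (∀ y ∈ V, ω y = mder u y) ∧ ∀ᶠ q in 𝓝[Icc (0:ℝ) 1] r, h q = u (γ q)

/-- Concatenation of two paths. -/
def loopConcat (γ₀ γ₁ : ℝ → Mbar) : ℝ → Mbar :=
  fun r => if r ≤ 1/2 then γ₀ (2*r) else γ₁ (2*r - 1)

/-- A free homotopy through loops in `U` between the loops `γ₀` and `γ₁`. -/
def LoopHomotopyIn (U : Set Mbar) (γ₀ γ₁ : ℝ → Mbar) : Prop :=
  ∃ H : ℝ × ℝ → Mbar, ContinuousOn H (Icc 0 1 ×ˢ Icc 0 1) ∧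
    (∀ r ∈ Icc (0:ℝ) 1, H (0, r) = γ₀ r ∧ H (1, r) = γ₁ r) ∧
    (∀ q ∈ Icc (0:ℝ) 1, H (q, 0) = H (q, 1)) ∧
    (∀ q ∈ Icc (0:ℝ) 1, ∀ r ∈ Icc (0:ℝ) 1, H (q, r) ∈ U)

/-- `F`, a function on loops in `U` with values in `E`, is induced by a group homomorphism
`H₁(U,ℤ) → E`: it is invariant under free homotopies of loops and additive under
concatenation of loops. -/
def PeriodHomomorphism {E : Type*} [NormedAddCommGroup E]
    (U : Set Mbar) (F : (ℝ → Mbar) → E) : Prop :=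
  (∀ γ₀ γ₁, IsLoopIn U γ₀ → IsLoopIn U γ₁ → LoopHomotopyIn U γ₀ γ₁ → F γ₀ = F γ₁) ∧
  (∀ γ₀ γ₁, IsLoopIn U γ₀ → IsLoopIn U γ₁ → γ₀ 1 = γ₁ 0 →
    F (loopConcat γ₀ γ₁) = F γ₀ + F γ₁)

/-! ### Directed immersions -/

/-- `u` is a holomorphic immersion on `U` directed by the cone `A` (an `A`-immersion):
its derivative in any local holomorphic coordinate takes values in `A`. -/
def AImmersionOn (A : Set (Fin n → ℂ)) (u : Mbar → Fin n → ℂ) (U : Set Mbar) : Prop :=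
  HoloOn u U ∧ ∀ x ∈ U, mder u x ∈ A

/-- `u : M → ℂⁿ` is a regular `A`-immersion of the affine curve `M = Mbar ∖ ends`. -/
def RegularAImmersion (A : Set (Fin n → ℂ)) (u : Mbar → Fin n → ℂ)
    (ends : Finset Mbar) : Prop :=
  AImmersionOn A u {x | x ∉ ends} ∧ ∀ p ∈ ends, MeroFunAt u p

/-!
If `θ` is a nowhere-vanishing regular 1-form on `M` and `a ∈ A`, then `θ • a` is a regular section
of `𝒜`: its values lie in `A` because `A` is invariant under `ℂ*`.
-/

section SmulConst

variable {M E : Type*} [TopologicalSpace M] [ChartedSpace ℂ M]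
  [NormedAddCommGroup E] [NormedSpace ℂ E]

theorem mder_smul_const (u : M → ℂ) (a : E) (x : M) :
    mder (fun y => u y • a) x = mder u x • a := by
  rcases eq_or_ne a 0 with rfl | ha
  · have h0 : (fun y => u y • (0 : E)) = fun _ => 0 := funext fun _ => smul_zero _
    rw [h0, smul_zero, mder, mfderiv_const]
    rfl
  by_cases hu : MDifferentiableAt 𝓘(ℂ, ℂ) 𝓘(ℂ, ℂ) u x
  · set L : ℂ →L[ℂ] E := (ContinuousLinearMap.id ℂ ℂ).smulRight a
    have hL : (fun y => u y • a) = L ∘ u := rfl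
    rw [mder, mder, hL, mfderiv_comp x L.mdifferentiableAt hu, L.mfderiv_eq]
    rfl
  -- `u` is recovered from `u • a` by a functional `φ` with `φ a = 1`.
  obtain ⟨φ, hφ⟩ := SeparatingDual.exists_eq_one (R := ℂ) ha
  have hua : ¬ MDifferentiableAt 𝓘(ℂ, ℂ) 𝓘(ℂ, E) (fun y => u y • a) x := fun h => hu <| by
    convert φ.mdifferentiableAt.comp x h using 1
    ext y
    simp [hφ]
  rw [mder, mder, mfderiv_zero_of_not_mdifferentiableAt hu,
    mfderiv_zero_of_not_mdifferentiableAt hua]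
  exact (zero_smul ℂ a).symm

theorem IsHolOneFormOn.smul_const {θ : M → ℂ} {U : Set M} (hθ : IsHolOneFormOn θ U) (a : E) :
    IsHolOneFormOn (fun x => θ x • a) U := by
  intro x hx
  obtain ⟨V, hV, u, hu, hθu⟩ := hθ x hx
  exact ⟨V, hV, fun y => u y • a, hu.smul mdifferentiableOn_const,
    fun y hy => by rw [mder_smul_const, ← hθu y hy]⟩

theorem MeroFormAt.smul_const {θ : M → ℂ} {p : M} (hθ : MeroFormAt θ p) (a : E) :
    MeroFormAt (fun x => θ x • a) p :=
  (hθ.smul (MeromorphicAt.const a _)).congr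
    (Eventually.of_forall fun z => by simp [pullCoeff, smul_smul])

end SmulConst

theorem statement_3_general {n : ℕ} (A : Set (Fin n → ℂ))
    (hA : IsPuncturedCone A)
    {Mbar : Type*} [TopologicalSpace Mbar] [ChartedSpace ℂ Mbar]
    (ends : Finset Mbar)
    -- `TM` is algebraically trivial: there is a nowhere-vanishing regular 1-form on `M`
    (htriv : ∃ θ : Mbar → ℂ, IsHolOneFormOn θ {x : Mbar | x ∉ ends} ∧
      (∀ x ∉ ends, θ x ≠ 0) ∧ ∀ p ∈ ends, MeroFormAt θ p) :
    -- `(A, M)` is good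
    ∃ t : Mbar → Fin n → ℂ, RegularSectionA A t ends := by
  obtain ⟨a, ha⟩ := hA.nonempty
  obtain ⟨θ, hθ, hθ_ne, hθ_mero⟩ := htriv
  exact ⟨fun x => θ x • a, ⟨hθ.smul_const a, fun x hx => hA.cone _ (hθ_ne x hx) a ha⟩,
    fun p hp => (hθ_mero p hp).smul_const a⟩

/-- Proposition 1.4(c): if the tangent bundle of the smooth affine curve `M`
is algebraically trivial (equivalently, `M` carries a nowhere-vanishing regular 1-form),
then the pair `(A, M)` is good: `𝒜` admits a regular section on `M`. -/
theorem statement_3 {n : ℕ} (hn : 2 ≤ n) (A : Set (Fin n → ℂ))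
    (hA : IsPuncturedCone A) (hAell : AlgebraicallyElliptic A) (hAhyp : NotInHyperplane A)
    {Mbar : Type*} [TopologicalSpace Mbar] [ChartedSpace ℂ Mbar]
    [IsManifold 𝓘(ℂ, ℂ) (⊤ : ℕ∞) Mbar] [CompactSpace Mbar] [ConnectedSpace Mbar]
    [T2Space Mbar]
    (ends : Finset Mbar) (hends : ends.Nonempty)
    (hMconn : IsConnected {x : Mbar | x ∉ ends})
    -- `TM` is algebraically trivial: there is a nowhere-vanishing regular 1-form on `M`
    (htriv : ∃ θ : Mbar → ℂ, IsHolOneFormOn θ {x : Mbar | x ∉ ends} ∧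
      (∀ x ∉ ends, θ x ≠ 0) ∧ ∀ p ∈ ends, MeroFormAt θ p) :
    -- `(A, M)` is good
    ∃ t : Mbar → Fin n → ℂ, RegularSectionA A t ends :=
  statement_3_general A hA ends htriv
end
end

section
/- Let M be an open Riemann surface, A ⊂ ℂⁿ∖{0} (n ≥ 3) the punctured cone on a connected submanifold Y of ℙ^{n−1}, and 𝒜 the subbundle of (T*M)^{⊕n} defined by A. If A ∩ ℝⁿ = ∅, then every harmonic map φ: M → ℝⁿ whose (1,0)-differential ∂φ is a holomorphic section of 𝒜 is an immersion. More generally, a harmonic map φ = (φ₁,…,φₙ): M → ℝⁿ is an immersion if and only if |𝔥_φ| < |∂φ|² = Σᵢ|∂φᵢ|² everywhere on M, where 𝔥_φ = Σᵢ(∂φᵢ)² is the Hopf differential of φ; equivalently, if and only if ∂φ/θ takes values in ℂⁿ∖(ℂ·ℝⁿ) for any nowhere-vanishing holomorphic 1-form θ on M. -/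
open Filter Topology Set
open scoped Manifold Topology

noncomputable section

/-! ### Riemann surfaces, holomorphic functions and 1-forms -/

variable {Mbar : Type*} [TopologicalSpace Mbar] [ChartedSpace ℂ Mbar]

/-! ### Sections of the bundle `𝒜 ⊂ (T*M)^{⊕n}` defined by the cone `A` -/

variable {n : ℕ}

variable {n : ℕ} in
/-- `φ` is a harmonic map on `U` with `(1,0)`-differential `∂φ = ω`: near every point of `U`,
`φ` is (up to an additive constant) the real part of a holomorphic map `u` with `du = 2ω`. -/
def HarmonicWithDel (φ : Mbar → Fin n → ℝ) (ω : Mbar → Fin n → ℂ) (U : Set Mbar) : Prop :=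
  ∀ x ∈ U, ∃ V ∈ 𝓝 x, ∃ u : Mbar → Fin n → ℂ, HoloOn u (V ∩ U) ∧
    (∀ y ∈ V ∩ U, (2:ℂ) • ω y = mder u y) ∧
    ∃ c : Fin n → ℝ, ∀ y ∈ V ∩ U, ∀ k, φ y k = (u y k).re + c k

variable {n : ℕ} in
/-- The flux `∫_γ dᶜφ` of the harmonic map `φ` with `∂φ = ω` along the loop `γ` equals `v`;
here `∫_γ dᶜφ = Im ∫_γ 2∂φ`. -/
def HasFlux (ω : Mbar → Fin n → ℂ) (γ : ℝ → Mbar) (v : Fin n → ℝ) : Prop :=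
  ∃ c : Fin n → ℂ, HasPeriod (fun x => (2:ℂ) • ω x) γ c ∧ ∀ k, (c k).im = v k
variable {n : ℕ} in
/-- `φ` is an immersion at `x`: its differential there (computed in the preferred chart)
is injective. -/
def RealImmersionAt (φ : Mbar → Fin n → ℝ) (x : Mbar) : Prop :=
  Function.Injective (fderiv ℝ (fun z : ℂ => φ ((chartAt ℂ x).symm z)) ((chartAt ℂ x) x))

/-- The set `ℂ·ℝⁿ ⊆ ℂⁿ` of complex multiples of real vectors. -/
def ComplexRealCone (n : ℕ) : Set (Fin n → ℂ) :=
  {z | ∃ (c : ℂ) (r : Fin n → ℝ), z = c • fun k => (r k : ℂ)}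

/-!
Everything is pointwise linear algebra. In a chart a harmonic map with `∂φ = ω` is locally
`Re u + c` with `du = 2ω`, so its real differential at `x` is `v ↦ Re (2 v ω(x))`; this map
fails to be injective exactly when `v ω(x)` is purely imaginary for some `v ≠ 0`, i.e. when
`ω(x) ∈ ℂ·ℝⁿ`. For the Hopf differential, `2 ∑ (Re (v z_k))² = |v|² ∑ |z_k|² + Re (v² ∑ z_k²)`,
and choosing `v²` opposite to the conjugate of `∑ z_k²` shows that `|∑ z_k²| = ∑ |z_k|²` exactly
when such a `v` exists. Finally, a cone avoiding `0` and `ℝⁿ` avoids `ℂ·ℝⁿ`, and `ℂ·ℝⁿ` is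
invariant under multiplication by `θ(x)⁻¹`.
-/

section ComplexRealCone

variable {n : ℕ}

lemma smul_mem_complexRealCone {z : Fin n → ℂ} (c : ℂ) (hz : z ∈ ComplexRealCone n) :
    c • z ∈ ComplexRealCone n := by
  obtain ⟨c', r, rfl⟩ := hz
  exact ⟨c * c', r, smul_smul c c' _⟩

lemma smul_mem_complexRealCone_iff {z : Fin n → ℂ} {c : ℂ} (hc : c ≠ 0) :
    c • z ∈ ComplexRealCone n ↔ z ∈ ComplexRealCone n :=
  ⟨fun h => by simpa [smul_smul, inv_mul_cancel₀ hc] using smul_mem_complexRealCone c⁻¹ h,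
    smul_mem_complexRealCone c⟩

lemma mem_complexRealCone_iff_exists_re_mul_eq_zero {z : Fin n → ℂ} :
    z ∈ ComplexRealCone n ↔ ∃ v ≠ 0, ∀ k, (v * z k).re = 0 := by
  constructor
  · rintro ⟨c, r, rfl⟩
    rcases eq_or_ne c 0 with rfl | hc
    · exact ⟨1, one_ne_zero, by simp⟩
    · refine ⟨Complex.I * c⁻¹, by simp [hc], fun k => ?_⟩
      simp [← mul_assoc, hc]
  · rintro ⟨v, hv, hre⟩
    refine ⟨v⁻¹ * Complex.I, fun k => (v * z k).im, funext fun k => ?_⟩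
    have hvz : v * z k = Complex.I * (v * z k).im := by
      apply Complex.ext <;> simp [hre k]
    rw [Pi.smul_apply, smul_eq_mul, mul_assoc, ← hvz, ← mul_assoc, inv_mul_cancel₀ hv, one_mul]

end ComplexRealCone

lemma injective_re_mul_iff {ι : Type*} (w : ι → ℂ) :
    (Function.Injective fun v : ℂ => fun k => (v * w k).re) ↔
      ¬∃ v ≠ 0, ∀ k, (v * w k).re = 0 := by
  let f : ℂ →+ (ι → ℝ) :=
    AddMonoidHom.mk' (fun v k => (v * w k).re) fun a b => by funext k; simp [add_mul]
  rw [show (fun v : ℂ => fun k => (v * w k).re) = f from rfl, injective_iff_map_eq_zero]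
  simp only [f, AddMonoidHom.mk'_apply, funext_iff, Pi.zero_apply, not_exists, not_and]
  exact forall_congr' fun v => not_imp_not.symm

section HopfInequality

variable {ι : Type*} [Fintype ι]

lemma two_mul_sum_re_mul_sq (z : ι → ℂ) (v : ℂ) :
    2 * ∑ k, (v * z k).re ^ 2 = ‖v‖ ^ 2 * ∑ k, ‖z k‖ ^ 2 + (v ^ 2 * ∑ k, z k ^ 2).re := by
  simp only [Finset.mul_sum, Complex.re_sum, ← Finset.sum_add_distrib]
  refine Finset.sum_congr rfl fun k _ => ?_
  simp only [Complex.sq_norm, Complex.normSq_apply]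
  simp only [pow_two, Complex.mul_re, Complex.mul_im]
  ring

lemma exists_sq_mul_re_eq_neg (h : ℂ) : ∃ v ≠ 0, (v ^ 2 * h).re = -(‖v‖ ^ 2 * ‖h‖) := by
  rcases eq_or_ne h 0 with rfl | h0
  · exact ⟨1, one_ne_zero, by simp⟩
  obtain ⟨v, hv⟩ := IsAlgClosed.exists_pow_nat_eq (-(starRingEnd ℂ h)) two_pos
  refine ⟨v, ?_, ?_⟩
  · rintro rfl
    simp_all
  · rw [← norm_pow, hv, neg_mul, Complex.neg_re, norm_neg, Complex.norm_conj,
      ← Complex.normSq_eq_conj_mul_self, Complex.normSq_eq_norm_sq, Complex.ofReal_re, sq]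

lemma norm_sum_sq_lt_sum_norm_sq_iff (z : ι → ℂ) :
    ‖∑ k, z k ^ 2‖ < ∑ k, ‖z k‖ ^ 2 ↔ ¬∃ v ≠ 0, ∀ k, (v * z k).re = 0 := by
  rw [← not_le, not_iff_not]
  constructor
  · intro hle
    obtain ⟨v, hv, hvh⟩ := exists_sq_mul_re_eq_neg (∑ k, z k ^ 2)
    have hsum : ∑ k, (v * z k).re ^ 2 = 0 := by
      have hid := two_mul_sum_re_mul_sq z v
      have hnonneg : 0 ≤ ∑ k, (v * z k).re ^ 2 := Finset.sum_nonneg fun k _ => sq_nonneg _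
      nlinarith [sq_nonneg ‖v‖]
    refine ⟨v, hv, fun k => ?_⟩
    exact pow_eq_zero_iff two_ne_zero |>.1 <|
      (Finset.sum_eq_zero_iff_of_nonneg fun k _ => sq_nonneg _).1 hsum k (Finset.mem_univ k)
  · rintro ⟨v, hv, hre⟩
    have hid := two_mul_sum_re_mul_sq z v
    simp only [hre, ne_eq, OfNat.ofNat_ne_zero, not_false_eq_true, zero_pow,
      Finset.sum_const_zero, mul_zero] at hid
    have hbound : -(‖v‖ ^ 2 * ‖∑ k, z k ^ 2‖) ≤ (v ^ 2 * ∑ k, z k ^ 2).re := by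
      have := Complex.abs_re_le_norm (v ^ 2 * ∑ k, z k ^ 2)
      rw [norm_mul, norm_pow] at this
      linarith [neg_abs_le (v ^ 2 * ∑ k, z k ^ 2).re]
    refine le_of_mul_le_mul_left ?_ (by positivity : 0 < ‖v‖ ^ 2)
    linarith

end HopfInequality

lemma hasDerivAt_comp_chartAt_symm {M : Type*} [TopologicalSpace M] [ChartedSpace ℂ M]
    {E : Type*} [NormedAddCommGroup E] [NormedSpace ℂ E] {u : M → E} {x : M}
    (hu : MDifferentiableAt 𝓘(ℂ, ℂ) 𝓘(ℂ, E) u x) :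
    HasDerivAt (fun z => u ((chartAt ℂ x).symm z)) (mder u x) (chartAt ℂ x x) := by
  have hwr : writtenInExtChartAt 𝓘(ℂ, ℂ) 𝓘(ℂ, E) x u = fun z => u ((chartAt ℂ x).symm z) := by
    funext z
    simp [writtenInExtChartAt, chartAt_self_eq]
  have hdiff : DifferentiableAt ℂ (fun z => u ((chartAt ℂ x).symm z)) (chartAt ℂ x x) := by
    have := hu.differentiableWithinAt_writtenInExtChartAt
    rw [hwr] at this
    simpa [differentiableWithinAt_univ] using this
  convert hdiff.hasDerivAt using 1
  rw [mder, hu.mfderiv, hwr, modelWithCornersSelf_coe, range_id, fderivWithin_univ]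
  rfl

section Harmonic

variable {M : Type*} [TopologicalSpace M] [ChartedSpace ℂ M] {n : ℕ}
  {φ : M → Fin n → ℝ} {ω : M → Fin n → ℂ} {U : Set M} {x : M}

lemma HarmonicWithDel.realImmersionAt_iff_injective (hφ : HarmonicWithDel φ ω U)
    (hU : U ∈ 𝓝 x) :
    RealImmersionAt φ x ↔ Function.Injective fun v : ℂ => fun k => (v * ((2 : ℂ) • ω x) k).re := by
  obtain ⟨V, hV, u, hu, hdu, c, hc⟩ := hφ x (mem_of_mem_nhds hU)
  have hVU : V ∩ U ∈ 𝓝 x := inter_mem hV hU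
  set e := chartAt ℂ x
  have hu' : HasDerivAt (fun z => u (e.symm z)) ((2 : ℂ) • ω x) (e x) := by
    rw [hdu x (mem_of_mem_nhds hVU)]
    exact hasDerivAt_comp_chartAt_symm (hu.mdifferentiableAt hVU)
  let re : (Fin n → ℂ) →L[ℝ] (Fin n → ℝ) :=
    ContinuousLinearMap.pi fun k => Complex.reCLM.comp (ContinuousLinearMap.proj k)
  have hloc : (fun z => φ (e.symm z)) =ᶠ[𝓝 (e x)] fun z => re (u (e.symm z)) + c := by
    have hx : e.symm (e x) = x := e.left_inv (mem_chart_source ℂ x)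
    filter_upwards [(e.continuousAt_symm (mem_chart_target ℂ x)).preimage_mem_nhds
      (hx ▸ hVU)] with z hz
    funext k
    simp [re, hc _ hz k]
  have hφ' := ((re.hasFDerivAt.comp _ (hu'.hasFDerivAt.restrictScalars ℝ)).add_const
    c).congr_of_eventuallyEq hloc
  rw [RealImmersionAt, hφ'.fderiv]
  convert Iff.rfl using 2
  funext v k
  simp [re]

lemma HarmonicWithDel.realImmersionAt_iff (hφ : HarmonicWithDel φ ω U) (hU : U ∈ 𝓝 x) :
    RealImmersionAt φ x ↔ ω x ∉ ComplexRealCone n := by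
  rw [hφ.realImmersionAt_iff_injective hU, injective_re_mul_iff,
    ← mem_complexRealCone_iff_exists_re_mul_eq_zero]
  exact not_congr (smul_mem_complexRealCone_iff two_ne_zero)

end Harmonic

lemma IsPuncturedCone.notMem_complexRealCone {n : ℕ} {A : Set (Fin n → ℂ)}
    (hA : IsPuncturedCone A) (hAR : A ∩ {z : Fin n → ℂ | ∀ k, (z k).im = 0} = ∅)
    {z : Fin n → ℂ} (hz : z ∈ A) : z ∉ ComplexRealCone n := by
  rintro ⟨c, r, rfl⟩
  rcases eq_or_ne c 0 with rfl | hc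
  · exact hA.not_zero (by simpa using hz)
  · have hr := hA.cone c⁻¹ (inv_ne_zero hc) _ hz
    rw [smul_smul, inv_mul_cancel₀ hc, one_smul] at hr
    exact hAR.subset ⟨hr, fun k => Complex.ofReal_im _⟩

theorem statement_18_general {n : ℕ} (A : Set (Fin n → ℂ))
    (hA : IsPuncturedCone A)
    -- `M` is an open Riemann surface
    {M : Type*} [TopologicalSpace M] [ChartedSpace ℂ M] :
    -- if `A ∩ ℝⁿ = ∅`, then every harmonic map `φ : M → ℝⁿ` whose `(1,0)`-differential is a
    -- holomorphic section of `𝒜` is an immersion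
    ((A ∩ {z : Fin n → ℂ | ∀ k, (z k).im = 0} = ∅) →
      ∀ (φ : M → Fin n → ℝ) (ω : M → Fin n → ℂ),
        HarmonicWithDel φ ω (univ : Set M) → (∀ x, ω x ∈ A) →
        ∀ x : M, RealImmersionAt φ x)
    ∧
    -- a harmonic map `φ` is an immersion iff `|𝔥_φ| < |∂φ|²` everywhere on `M`
    (∀ (φ : M → Fin n → ℝ) (ω : M → Fin n → ℂ),
      HarmonicWithDel φ ω (univ : Set M) →
      ((∀ x : M, RealImmersionAt φ x) ↔
        ∀ x : M, ‖∑ k, (ω x k) ^ 2‖ < ∑ k, ‖ω x k‖ ^ 2))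
    ∧
    -- equivalently, iff `∂φ/θ` takes values in `ℂⁿ ∖ (ℂ·ℝⁿ)` for any nowhere-vanishing
    -- holomorphic 1-form `θ` on `M`
    (∀ (φ : M → Fin n → ℝ) (ω : M → Fin n → ℂ),
      HarmonicWithDel φ ω (univ : Set M) →
      ∀ θ : M → ℂ, IsHolOneFormOn θ (univ : Set M) → (∀ x, θ x ≠ 0) →
      ((∀ x : M, RealImmersionAt φ x) ↔
        ∀ x : M, (θ x)⁻¹ • ω x ∉ ComplexRealCone n)) := by
  have hopf_iff (z : Fin n → ℂ) :
      ‖∑ k, z k ^ 2‖ < ∑ k, ‖z k‖ ^ 2 ↔ z ∉ ComplexRealCone n := by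
    rw [norm_sum_sq_lt_sum_norm_sq_iff, mem_complexRealCone_iff_exists_re_mul_eq_zero]
  refine ⟨fun hAR φ ω hφ hωA x => ?_, fun φ ω hφ => ?_, fun φ ω hφ θ _ hθ => ?_⟩
  · exact (hφ.realImmersionAt_iff univ_mem).2 (hA.notMem_complexRealCone hAR (hωA x))
  · exact forall_congr' fun x => (hφ.realImmersionAt_iff univ_mem).trans (hopf_iff _).symm
  · refine forall_congr' fun x => (hφ.realImmersionAt_iff univ_mem).trans ?_
    exact not_congr (smul_mem_complexRealCone_iff (inv_ne_zero (hθ x))).symm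

/-- Section 5: if `A ∩ ℝⁿ = ∅` then every harmonic `A`-map is an immersion;
more generally, a harmonic map `φ` is an immersion iff `|𝔥_φ| < |∂φ|²` everywhere, where
`𝔥_φ` is the Hopf differential, iff `∂φ/θ` avoids `ℂ·ℝⁿ` for any nowhere-vanishing
holomorphic 1-form `θ` on `M`. -/
theorem statement_18 {n : ℕ} (hn : 3 ≤ n) (A : Set (Fin n → ℂ))
    (hA : IsPuncturedCone A)
    -- `M` is an open Riemann surface
    {M : Type*} [TopologicalSpace M] [ChartedSpace ℂ M]
    [IsManifold 𝓘(ℂ, ℂ) (⊤ : ℕ∞) M] [ConnectedSpace M] [NoncompactSpace M] [T2Space M] :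
    -- if `A ∩ ℝⁿ = ∅`, then every harmonic map `φ : M → ℝⁿ` whose `(1,0)`-differential is a
    -- holomorphic section of `𝒜` is an immersion
    ((A ∩ {z : Fin n → ℂ | ∀ k, (z k).im = 0} = ∅) →
      ∀ (φ : M → Fin n → ℝ) (ω : M → Fin n → ℂ),
        HarmonicWithDel φ ω (univ : Set M) → (∀ x, ω x ∈ A) →
        ∀ x : M, RealImmersionAt φ x)
    ∧
    -- a harmonic map `φ` is an immersion iff `|𝔥_φ| < |∂φ|²` everywhere on `M`
    (∀ (φ : M → Fin n → ℝ) (ω : M → Fin n → ℂ),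
      HarmonicWithDel φ ω (univ : Set M) →
      ((∀ x : M, RealImmersionAt φ x) ↔
        ∀ x : M, ‖∑ k, (ω x k) ^ 2‖ < ∑ k, ‖ω x k‖ ^ 2))
    ∧
    -- equivalently, iff `∂φ/θ` takes values in `ℂⁿ ∖ (ℂ·ℝⁿ)` for any nowhere-vanishing
    -- holomorphic 1-form `θ` on `M`
    (∀ (φ : M → Fin n → ℝ) (ω : M → Fin n → ℂ),
      HarmonicWithDel φ ω (univ : Set M) →
      ∀ θ : M → ℂ, IsHolOneFormOn θ (univ : Set M) → (∀ x, θ x ≠ 0) →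
      ((∀ x : M, RealImmersionAt φ x) ↔
        ∀ x : M, (θ x)⁻¹ • ω x ∉ ComplexRealCone n)) :=
  statement_18_general A hA
end
end
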